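/- With the same setup as the two-soliton collision laws, the cross-overlap is preserved: |⟨u₁, u_{{1},2}⟩| = |⟨u_{{2},1}, u₂⟩|. -/

import Mathlib

open Complex Matrix BigOperators

noncomputable section

/-- Hermitian inner product on ℂ^m, linear in the first slot. -/
def herm {m : ℕ} (u v : Fin m → ℂ) : ℂ := ∑ a, u a * (starRingEnd ℂ) (v a)

/-! Projecting `u₂ - d ⟨u₂, u₁⟩ u₁` onto the unit vector `u₁` gives `(1 - d) ⟨u₂, u₁⟩`, and for
`d = (ζ₁ - ζ̄₁)/(ζ₁ - ζ̄₂)` the factor `1 - d` is the prefactor `(ζ̄₁ - ζ̄₂)/(ζ₁ - ζ̄₂)` of `u_{{1},2}`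
itself. So, up to conjugation, both overlaps are `e^{φ₁₂} ⟨u₁, u₂⟩` times the square of a prefactor,
and the two prefactors have equal modulus because `|ζ₂ - ζ̄₁| = |ζ₁ - ζ̄₂|`. -/

open ComplexConjugate

section Herm

variable {m : ℕ}

theorem conj_herm (u v : Fin m → ℂ) : conj (herm u v) = herm v u := by
  simp only [herm, map_sum, map_mul, conj_conj, mul_comm]

theorem herm_mul_sub_mul (u v w : Fin m → ℂ) (c k : ℂ) :
    herm u (fun a => c * (v a - k * w a)) = conj c * (herm u v - conj k * herm u w) := by
  simp only [herm, Finset.mul_sum, mul_sub, ← Finset.sum_sub_distrib, map_mul, map_sub]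
  exact Finset.sum_congr rfl fun a _ => by ring

theorem herm_mul_sub_proj_right {u : Fin m → ℂ} (hu : herm u u = 1) (v : Fin m → ℂ) (c d : ℂ) :
    herm u (fun a => c * (v a - d * herm v u * u a)) = conj (c * (1 - d)) * herm u v := by
  rw [herm_mul_sub_mul, hu, map_mul, map_mul, conj_herm, map_sub, map_one]
  ring

theorem herm_mul_sub_proj_left {v : Fin m → ℂ} (hv : herm v v = 1) (u : Fin m → ℂ) (c d : ℂ) :
    herm (fun a => c * (u a - d * herm u v * v a)) v = c * (1 - d) * herm u v := by
  rw [← conj_herm, herm_mul_sub_proj_right hv, map_mul, conj_conj, conj_herm]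

end Herm

theorem sub_conj_ne_zero_of_im_pos {z w : ℂ} (hz : 0 < z.im) (hw : 0 < w.im) :
    z - conj w ≠ 0 := fun h => by
  have := congrArg Complex.im h
  simp only [sub_im, conj_im, zero_im] at this
  linarith

theorem one_sub_sub_conj_div {z w : ℂ} (h : z - conj w ≠ 0) :
    1 - (z - conj z) / (z - conj w) = (conj z - conj w) / (z - conj w) := by
  field_simp
  ring

theorem norm_conj_sub_div_comm (z w : ℂ) :
    ‖(conj z - conj w) / (z - conj w)‖ = ‖(conj w - conj z) / (w - conj z)‖ := by
  have hden : ‖w - conj z‖ = ‖z - conj w‖ := by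
    rw [← norm_conj, map_sub, conj_conj, norm_sub_rev]
  rw [norm_div, norm_div, hden, ← map_sub, ← map_sub, norm_conj, norm_conj, norm_sub_rev]

theorem stmt12_general {m : ℕ} (ζ₁ ζ₂ : ℂ) (h1 : 0 < ζ₁.im) (h2 : 0 < ζ₂.im)
    (u₁ u₂ : Fin m → ℂ) (hu1 : herm u₁ u₁ = 1) (hu2 : herm u₂ u₂ = 1) :
    let eneg : ℝ := (‖(ζ₁ - ζ₂) / (ζ₁ - (starRingEnd ℂ) ζ₂)‖)^2 *
      (1 + ((ζ₁ - (starRingEnd ℂ) ζ₁) * (ζ₂ - (starRingEnd ℂ) ζ₂)).re /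
        (‖ζ₁ - (starRingEnd ℂ) ζ₂‖)^2 * (‖herm u₁ u₂‖)^2)
    let u12 : Fin m → ℂ := fun a =>
      (((Real.sqrt eneg)⁻¹ : ℝ) : ℂ) *
        (((starRingEnd ℂ) ζ₁ - (starRingEnd ℂ) ζ₂) / (ζ₁ - (starRingEnd ℂ) ζ₂)) *
        (u₂ a - (ζ₁ - (starRingEnd ℂ) ζ₁) / (ζ₁ - (starRingEnd ℂ) ζ₂) *
          herm u₂ u₁ * u₁ a)
    let u21 : Fin m → ℂ := fun a =>
      (((Real.sqrt eneg)⁻¹ : ℝ) : ℂ) *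
        (((starRingEnd ℂ) ζ₂ - (starRingEnd ℂ) ζ₁) / (ζ₂ - (starRingEnd ℂ) ζ₁)) *
        (u₁ a - (ζ₂ - (starRingEnd ℂ) ζ₂) / (ζ₂ - (starRingEnd ℂ) ζ₁) *
          herm u₁ u₂ * u₂ a)
    ‖herm u₁ u12‖ = ‖herm u21 u₂‖ := by
  intro eneg u12 u21
  rw [herm_mul_sub_proj_right hu1, herm_mul_sub_proj_left hu2,
    one_sub_sub_conj_div (sub_conj_ne_zero_of_im_pos h1 h2),
    one_sub_sub_conj_div (sub_conj_ne_zero_of_im_pos h2 h1)]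
  simp only [norm_mul, norm_conj, norm_conj_sub_div_comm ζ₁ ζ₂]

theorem stmt12 {m : ℕ} (ζ₁ ζ₂ : ℂ) (h1 : 0 < ζ₁.im) (h2 : 0 < ζ₂.im) (hne : ζ₁ ≠ ζ₂)
    (u₁ u₂ : Fin m → ℂ) (hu1 : herm u₁ u₁ = 1) (hu2 : herm u₂ u₂ = 1) :
    let eneg : ℝ := (‖(ζ₁ - ζ₂) / (ζ₁ - (starRingEnd ℂ) ζ₂)‖)^2 *
      (1 + ((ζ₁ - (starRingEnd ℂ) ζ₁) * (ζ₂ - (starRingEnd ℂ) ζ₂)).re /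
        (‖ζ₁ - (starRingEnd ℂ) ζ₂‖)^2 * (‖herm u₁ u₂‖)^2)
    let u12 : Fin m → ℂ := fun a =>
      (((Real.sqrt eneg)⁻¹ : ℝ) : ℂ) *
        (((starRingEnd ℂ) ζ₁ - (starRingEnd ℂ) ζ₂) / (ζ₁ - (starRingEnd ℂ) ζ₂)) *
        (u₂ a - (ζ₁ - (starRingEnd ℂ) ζ₁) / (ζ₁ - (starRingEnd ℂ) ζ₂) *
          herm u₂ u₁ * u₁ a)
    let u21 : Fin m → ℂ := fun a =>
      (((Real.sqrt eneg)⁻¹ : ℝ) : ℂ) *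
        (((starRingEnd ℂ) ζ₂ - (starRingEnd ℂ) ζ₁) / (ζ₂ - (starRingEnd ℂ) ζ₁)) *
        (u₁ a - (ζ₂ - (starRingEnd ℂ) ζ₂) / (ζ₂ - (starRingEnd ℂ) ζ₁) *
          herm u₁ u₂ * u₂ a)
    ‖herm u₁ u12‖ = ‖herm u21 u₂‖ :=
  stmt12_general ζ₁ ζ₂ h1 h2 u₁ u₂ hu1 hu2

end
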